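/- arXiv:1709.06707 — 5 statements merged into one kernel-verified Lean document; each statement's English description precedes it below -/
import Mathlib

section
/- Let f and g be bounded analytic functions on the complement Ω of a compact set in the Riemann sphere containing ∞, with |f(z)| + |g(z)| ≤ 1 on Ω, f(∞) ∈ (0,1), and g having a zero of order ℓ ≥ 1 at ∞ with leading Laurent coefficient a_ℓ ≠ 0. Then there exists ε > 0 such that h(z) = f(z) + ε·conj(a_ℓ)·z^ℓ·g(z) satisfies ‖h‖_∞ ≤ 1 and h(∞) = f(∞) + ε|a_ℓ|^2 > f(∞). -/
open Filter Bornology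

/-!
Put `u(z) = z^ℓ g(z)`. It suffices to find `K > 0` with `‖u z‖ ≤ K (1 - ‖f z‖)` off `e`: then
`ε = (K ‖a‖)⁻¹` gives `‖h‖ ≤ ‖f‖ + (1 - ‖f‖) = 1`. Near `∞` such a `K` exists because `u` is
bounded there while `‖f‖` stays below some `1 - δ < 1`; on a disc `‖z‖ ≤ R` one may take `K = R^ℓ`,
since `‖u‖ ≤ R^ℓ ‖g‖ ≤ R^ℓ (1 - ‖f‖)`.
-/

theorem exists_eventually_norm_le_mul_one_sub_norm {α E F : Type*} [SeminormedAddCommGroup E]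
    [SeminormedAddCommGroup F] {l : Filter α} {f : α → E} {u : α → F} {c : E}
    (hf : Tendsto f l (nhds c)) (hc : ‖c‖ < 1)
    (hu : IsBoundedUnder (· ≤ ·) l fun z => ‖u z‖) :
    ∃ K, ∀ᶠ z in l, ‖u z‖ ≤ K * (1 - ‖f z‖) := by
  obtain ⟨B, hB⟩ := hu
  obtain ⟨δ, hδ, hcδ⟩ : ∃ δ > 0, ‖c‖ < 1 - δ := ⟨(1 - ‖c‖) / 2, by linarith, by linarith⟩
  have hf_lt : ∀ᶠ z in l, ‖f z‖ < 1 - δ := hf.norm.eventually_lt_const hcδ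
  refine ⟨max B 0 / δ, ?_⟩
  filter_upwards [hB, hf_lt] with z hu_le hf_lt
  calc ‖u z‖ ≤ max B 0 / δ * δ := by
        rw [div_mul_cancel₀ _ hδ.ne']
        exact hu_le.trans (le_max_left _ _)
    _ ≤ max B 0 / δ * (1 - ‖f z‖) := by gcongr; linarith

theorem norm_pow_mul_le_of_norm_le {𝕜 : Type*} [NormedDivisionRing 𝕜] {z y : 𝕜} {R : ℝ} (ℓ : ℕ)
    (hz : ‖z‖ ≤ R) : ‖z ^ ℓ * y‖ ≤ R ^ ℓ * ‖y‖ := by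
  rw [norm_mul, norm_pow]
  gcongr

theorem exists_forall_norm_pow_mul_le_mul_one_sub_norm {𝕜 E : Type*} [NormedDivisionRing 𝕜]
    [SeminormedAddCommGroup E] {s : Set 𝕜} {f : 𝕜 → E} {g : 𝕜 → 𝕜} {ℓ : ℕ} {K : ℝ}
    (hfg : ∀ z ∈ s, ‖f z‖ + ‖g z‖ ≤ 1)
    (hK : ∀ᶠ z in cobounded 𝕜, ‖z ^ ℓ * g z‖ ≤ K * (1 - ‖f z‖)) :
    ∃ K' > 0, ∀ z ∈ s, ‖z ^ ℓ * g z‖ ≤ K' * (1 - ‖f z‖) := by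
  obtain ⟨R, -, hR⟩ := (Metric.hasBasis_cobounded_compl_closedBall (0 : 𝕜)).eventually_iff.1 hK
  set R' := max R 1
  have hR' : 0 < R' ^ ℓ := pow_pos (lt_max_of_lt_right one_pos) ℓ
  refine ⟨max K (R' ^ ℓ), lt_max_of_lt_right hR', fun z hz => ?_⟩
  have hf_le : 0 ≤ 1 - ‖f z‖ := by linarith [hfg z hz, norm_nonneg (g z)]
  by_cases hzR : ‖z‖ ≤ R'
  · calc ‖z ^ ℓ * g z‖ ≤ R' ^ ℓ * ‖g z‖ := norm_pow_mul_le_of_norm_le ℓ hzR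
      _ ≤ R' ^ ℓ * (1 - ‖f z‖) := by gcongr; linarith [hfg z hz]
      _ ≤ max K (R' ^ ℓ) * (1 - ‖f z‖) := by gcongr; exact le_max_right _ _
  · have hz_out : z ∈ (Metric.closedBall 0 R)ᶜ := by
      simp only [Set.mem_compl_iff, mem_closedBall_zero_iff, not_le]
      exact (le_max_left R 1).trans_lt (not_le.1 hzR)
    calc ‖z ^ ℓ * g z‖ ≤ K * (1 - ‖f z‖) := hR hz_out
      _ ≤ max K (R' ^ ℓ) * (1 - ‖f z‖) := by gcongr; exact le_max_left _ _

theorem fisher_variational_step_general (e : Set ℂ)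
    (f g : ℂ → ℂ)
    (hfg : ∀ z ∉ e, ‖f z‖ + ‖g z‖ ≤ 1)
    (c : ℝ) (hc0 : 0 < c) (hc1 : c < 1)
    (hfinf : Tendsto f (cobounded ℂ) (nhds ((c : ℂ))))
    (ℓ : ℕ) (a : ℂ) (ha : a ≠ 0)
    (hginf : Tendsto (fun z => z ^ ℓ * g z) (cobounded ℂ) (nhds a)) :
    ∃ ε : ℝ, 0 < ε ∧
      (∀ z ∉ e, ‖f z + (ε : ℂ) * (starRingEnd ℂ) a * z ^ ℓ * g z‖ ≤ 1) ∧
      Tendsto (fun z => f z + (ε : ℂ) * (starRingEnd ℂ) a * z ^ ℓ * g z) (cobounded ℂ)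
        (nhds ((c + ε * ‖a‖ ^ 2 : ℝ) : ℂ)) ∧
      c < c + ε * ‖a‖ ^ 2 := by
  have hc : ‖(c : ℂ)‖ < 1 := by rwa [Complex.norm_real, Real.norm_of_nonneg hc0.le]
  obtain ⟨K₀, hK₀⟩ :=
    exists_eventually_norm_le_mul_one_sub_norm hfinf hc hginf.norm.isBoundedUnder_le
  obtain ⟨K, hK, hK_le⟩ := exists_forall_norm_pow_mul_le_mul_one_sub_norm (s := eᶜ) hfg hK₀
  have ha' : 0 < ‖a‖ := norm_pos_iff.2 ha
  set ε := (K * ‖a‖)⁻¹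
  have hε : 0 < ε := by positivity
  refine ⟨ε, hε, fun z hz => ?_, ?_, lt_add_of_pos_right c (by positivity)⟩
  · calc ‖f z + (ε : ℂ) * (starRingEnd ℂ) a * z ^ ℓ * g z‖
        ≤ ‖f z‖ + ε * ‖a‖ * ‖z ^ ℓ * g z‖ := by
          refine (norm_add_le _ _).trans_eq ?_
          simp only [mul_assoc, norm_mul, Complex.norm_real, Complex.norm_conj,
            Real.norm_of_nonneg hε.le]
      _ ≤ ‖f z‖ + ε * ‖a‖ * (K * (1 - ‖f z‖)) := by gcongr; exact hK_le z hz
      _ = ‖f z‖ + ε * (K * ‖a‖) * (1 - ‖f z‖) := by ring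
      _ = 1 := by rw [inv_mul_cancel₀ (by positivity)]; ring
  · convert hfinf.add (hginf.const_mul ((ε : ℂ) * (starRingEnd ℂ) a)) using 2 with z
    · ring
    · push_cast
      rw [mul_assoc, Complex.conj_mul']

/-- (Variational step in Fisher's argument.)  Let `f, g` be bounded analytic
functions on the complement `Ω = ℂ ∖ 𝔢` of a compact set `𝔢` (analytic at `∞` as well), with
`|f(z)| + |g(z)| ≤ 1` on `Ω`, `f(∞) = c ∈ (0,1)`, and `g` having a zero of order `ℓ ≥ 1` at `∞`
with leading Laurent coefficient `a ≠ 0` (so `z^ℓ g(z) → a` at `∞`).  Then there is `ε > 0` such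
that `h(z) = f(z) + ε · conj(a) · z^ℓ · g(z)` satisfies `‖h‖_∞ ≤ 1` and
`h(∞) = f(∞) + ε |a|² > f(∞)`. -/
theorem fisher_variational_step (e : Set ℂ) (hcomp : IsCompact e)
    (f g : ℂ → ℂ)
    (hf : DifferentiableOn ℂ f eᶜ) (hg : DifferentiableOn ℂ g eᶜ)
    (hfg : ∀ z ∉ e, ‖f z‖ + ‖g z‖ ≤ 1)
    (c : ℝ) (hc0 : 0 < c) (hc1 : c < 1)
    (hfinf : Tendsto f (cobounded ℂ) (nhds ((c : ℂ))))
    (ℓ : ℕ) (hℓ : 1 ≤ ℓ) (a : ℂ) (ha : a ≠ 0)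
    (hginf : Tendsto (fun z => z ^ ℓ * g z) (cobounded ℂ) (nhds a)) :
    ∃ ε : ℝ, 0 < ε ∧
      (∀ z ∉ e, ‖f z + (ε : ℂ) * (starRingEnd ℂ) a * z ^ ℓ * g z‖ ≤ 1) ∧
      Tendsto (fun z => f z + (ε : ℂ) * (starRingEnd ℂ) a * z ^ ℓ * g z) (cobounded ℂ)
        (nhds ((c + ε * ‖a‖ ^ 2 : ℝ) : ℂ)) ∧
      c < c + ε * ‖a‖ ^ 2 :=
  fisher_variational_step_general e f g hfg c hc0 hc1 hfinf ℓ a ha hginf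
end

section
/- Let 𝔢 be a regular Parreau–Widom set. The map χ ↦ Q_χ(∞) from the character group π₁(Ω)* to (0,1] is upper semicontinuous: if χ_j → χ then limsup_j Q_{χ_j}(∞) ≤ Q_χ(∞). -/
open Metric Set

/-- A bounded analytic `χ`-character-automorphic function on the unit disc (the universal
cover of `Ω`, with `0` lying over `∞`), relative to the action `T` of the deck group `Γ`. -/
def IsHinf {Γ : Type*} [Group Γ] (T : Γ → ℂ → ℂ) (χ : Γ →* Circle) (h : ℂ → ℂ) : Prop :=
  DifferentiableOn ℂ h (ball (0 : ℂ) 1) ∧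
  (∃ C : ℝ, ∀ z ∈ ball (0 : ℂ) 1, ‖h z‖ ≤ C) ∧
  (∀ γ : Γ, ∀ z ∈ ball (0 : ℂ) 1, h (T γ z) = (χ γ : ℂ) * h z)

/-- `Q` is a dual Widom maximizer for the character `χ`. -/
def IsDualWidomMaximizer {Γ : Type*} [Group Γ] (T : Γ → ℂ → ℂ) (χ : Γ →* Circle)
    (Q : ℂ → ℂ) : Prop :=
  IsHinf T χ Q ∧ (∀ z ∈ ball (0 : ℂ) 1, ‖Q z‖ ≤ 1) ∧
  (Q 0).im = 0 ∧ 0 < (Q 0).re ∧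
  ∀ g : ℂ → ℂ, IsHinf T χ g → (∀ z ∈ ball (0 : ℂ) 1, ‖g z‖ ≤ 1) →
    (g 0).im = 0 → 0 < (g 0).re → (g 0).re ≤ (Q 0).re

/-- The character group `π₁(Ω)* = Γ →* Circle` carries the topology of pointwise
convergence (induced from the product topology). -/
noncomputable instance charGroupTopology (Γ : Type*) [Group Γ] :
    TopologicalSpace (Γ →* Circle) :=
  TopologicalSpace.induced (fun χ (γ : Γ) => χ γ) inferInstance

/-!
Suppose `Q_{χ'}(0) ≥ y` along an ultrafilter converging to `χ`. The maximizers are bounded by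
`1`, so they converge pointwise on the disc along the ultrafilter. By Schwarz's lemma they are
uniformly Lipschitz on compact subsets, so the convergence is locally uniform and the limit `h`
is holomorphic (Montel). Since `χ'(γ) → χ(γ)`, `h` is `χ`-automorphic, hence a competitor for
`Q_χ` with `h(0) ≥ y`, and maximality gives `Q_χ(0) ≥ y`.
-/

open Filter Topology

section BoundedHolomorphic

variable {E ι : Type*} [NormedAddCommGroup E] [NormedSpace ℂ E]
  {U K : Set ℂ} {M δ : ℝ}

/-- Schwarz's lemma on the discs of radius `δ` around `K` gives the constant `2M/δ` for nearby
points; for distant points the trivial bound `2M` already suffices. -/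
lemma dist_le_div_mul_dist_of_norm_le {f : ℂ → E} (hf : DifferentiableOn ℂ f U)
    (hb : ∀ z ∈ U, ‖f z‖ ≤ M) (hδ : 0 < δ) (hKU : thickening δ K ⊆ U)
    {x y : ℂ} (hx : x ∈ K) (hy : y ∈ U) :
    dist (f x) (f y) ≤ 2 * M / δ * dist x y := by
  have hxU : x ∈ U := hKU (self_subset_thickening hδ K hx)
  have hdist : ∀ w ∈ U, dist (f w) (f x) ≤ 2 * M := fun w hw =>
    (dist_le_norm_add_norm _ _).trans (by linarith [hb w hw, hb x hxU])
  rcases lt_or_ge (dist y x) δ with hyx | hyx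
  · have hball : ball x δ ⊆ U := (ball_subset_thickening hx δ).trans hKU
    rw [dist_comm (f x), dist_comm x]
    exact Complex.dist_le_div_mul_dist_of_mapsTo_ball (hf.mono hball)
      (fun w hw => mem_closedBall.mpr (hdist w (hball hw))) (mem_ball.mpr hyx)
  · have hM : 0 ≤ M := (norm_nonneg _).trans (hb x hxU)
    calc dist (f x) (f y) ≤ 2 * M := dist_comm (f x) (f y) ▸ hdist y hy
      _ = 2 * M / δ * δ := by field_simp
      _ ≤ 2 * M / δ * dist x y := by rw [dist_comm]; gcongr

lemma equicontinuousOn_of_norm_le {F : ι → ℂ → E} (hF : ∀ i, DifferentiableOn ℂ (F i) U)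
    (hb : ∀ i, ∀ z ∈ U, ‖F i z‖ ≤ M) (hδ : 0 < δ) (hKU : thickening δ K ⊆ U) :
    EquicontinuousOn F K := by
  refine (LipschitzOnWith.uniformEquicontinuousOn F (2 * M / δ).toNNReal fun i =>
    LipschitzOnWith.of_dist_le_mul fun x hx y hy => ?_).equicontinuousOn
  exact (dist_le_div_mul_dist_of_norm_le (hF i) (hb i) hδ hKU hx
    (hKU (self_subset_thickening hδ K hy))).trans
    (by gcongr; exact Real.le_coe_toNNReal _)

lemma tendstoLocallyUniformlyOn_of_tendsto_of_norm_le {F : ι → ℂ → E} {f : ℂ → E}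
    {p : Filter ι} (hU : IsOpen U) (hF : ∀ i, DifferentiableOn ℂ (F i) U)
    (hb : ∀ i, ∀ z ∈ U, ‖F i z‖ ≤ M) (hlim : ∀ z ∈ U, Tendsto (F · z) p (𝓝 (f z))) :
    TendstoLocallyUniformlyOn F f p U := by
  rw [tendstoLocallyUniformlyOn_iff_forall_isCompact hU]
  intro K hKU hK
  obtain ⟨δ, hδ, hthick⟩ := hK.exists_thickening_subset_open hU hKU
  have : CompactSpace K := isCompact_iff_compactSpace.mp hK
  have hequi : Equicontinuous (K.domRestrict ∘ F) :=
    (equicontinuous_restrict_iff F).mpr (equicontinuousOn_of_norm_le hF hb hδ hthick)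
  have hunif := (hequi.tendsto_uniformFun_iff_pi p (K.domRestrict f)).mpr
    (tendsto_pi_nhds.mpr fun z => hlim z (hKU z.2))
  rw [UniformFun.tendsto_iff_tendstoUniformly] at hunif
  exact tendstoUniformlyOn_iff_tendstoUniformly_comp_coe.mpr hunif

theorem differentiableOn_of_tendsto_of_norm_le [CompleteSpace E] {F : ι → ℂ → E} {f : ℂ → E}
    {p : Filter ι} [p.NeBot] (hU : IsOpen U) (hF : ∀ i, DifferentiableOn ℂ (F i) U)
    (hb : ∀ i, ∀ z ∈ U, ‖F i z‖ ≤ M) (hlim : ∀ z ∈ U, Tendsto (F · z) p (𝓝 (f z))) :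
    DifferentiableOn ℂ f U :=
  (tendstoLocallyUniformlyOn_of_tendsto_of_norm_le hU hF hb hlim).differentiableOn
    (Eventually.of_forall hF) hU

end BoundedHolomorphic

lemma Ultrafilter.exists_forall_tendsto_of_norm_le {ι α E : Type*} [NormedAddCommGroup E]
    [ProperSpace E] (p : Ultrafilter ι) {F : ι → α → E} {s : Set α} {M : ℝ}
    (hb : ∀ i, ∀ z ∈ s, ‖F i z‖ ≤ M) :
    ∃ f : α → E, ∀ z ∈ s, Tendsto (F · z) p (𝓝 (f z)) := by
  have hpt : ∀ z, ∃ c, z ∈ s → Tendsto (F · z) p (𝓝 c) := by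
    intro z
    by_cases hz : z ∈ s
    · obtain ⟨c, -, hc⟩ := (isCompact_closedBall (0 : E) M).ultrafilter_le_nhds'
        (p.map (F · z)) (Ultrafilter.mem_map.mpr <| univ_mem' fun i => by simpa using hb i z hz)
      exact ⟨c, fun _ => hc⟩
    · exact ⟨0, fun h => absurd h hz⟩
  choose f hf using hpt
  exact ⟨f, hf⟩

lemma upperSemicontinuousAt_of_forall_ultrafilter {X β : Type*} [TopologicalSpace X]
    [LinearOrder β] {f : X → β} {x : X}
    (h : ∀ p : Ultrafilter X, ↑p ≤ 𝓝 x → ∀ y, (∀ᶠ x' in p, y ≤ f x') → y ≤ f x) :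
    UpperSemicontinuousAt f x := by
  intro y hy
  by_contra hnot
  simp only [not_eventually, not_lt] at hnot
  have := frequently_iff_neBot.mp hnot
  obtain ⟨p, hp⟩ := exists_ultrafilter_le (𝓝 x ⊓ 𝓟 {x' | y ≤ f x'})
  exact (h p (hp.trans inf_le_left) y (hp.trans inf_le_right (mem_principal_self _))).not_gt hy

lemma continuous_character_apply {Γ : Type*} [Group Γ] (γ : Γ) :
    Continuous fun χ : Γ →* Circle => (χ γ : ℂ) :=
  continuous_subtype_val.comp <| (continuous_apply γ).comp
    (continuous_induced_dom : Continuous fun χ : Γ →* Circle => fun γ => χ γ)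

lemma isHinf_of_tendsto {Γ : Type*} [Group Γ] {T : Γ → ℂ → ℂ}
    (hTmaps : ∀ γ : Γ, MapsTo (T γ) (ball (0 : ℂ) 1) (ball (0 : ℂ) 1))
    {p : Filter (Γ →* Circle)} [p.NeBot] {χ : Γ →* Circle} (hp : p ≤ 𝓝 χ)
    {F : (Γ →* Circle) → ℂ → ℂ} (hF : ∀ χ', IsHinf T χ' (F χ')) {M : ℝ}
    (hb : ∀ χ', ∀ z ∈ ball (0 : ℂ) 1, ‖F χ' z‖ ≤ M) {h : ℂ → ℂ}
    (hlim : ∀ z ∈ ball (0 : ℂ) 1, Tendsto (F · z) p (𝓝 (h z))) :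
    IsHinf T χ h := by
  refine ⟨differentiableOn_of_tendsto_of_norm_le isOpen_ball (fun χ' => (hF χ').1) hb hlim,
    ⟨M, fun z hz => le_of_tendsto' (hlim z hz).norm fun χ' => hb χ' z hz⟩,
    fun γ z hz => tendsto_nhds_unique (hlim _ (hTmaps γ hz)) ?_⟩
  simp only [(hF _).2.2 γ z hz]
  exact (((continuous_character_apply γ).tendsto χ).mono_left hp).mul (hlim z hz)

theorem dualWidomMaximizer_upperSemicontinuous_general {Γ : Type*} [Group Γ]
    (T : Γ → ℂ → ℂ)
    (hTmaps : ∀ γ : Γ, MapsTo (T γ) (ball (0 : ℂ) 1) (ball (0 : ℂ) 1))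
    (Q : (Γ →* Circle) → ℂ → ℂ)
    (hQ : ∀ χ : Γ →* Circle, IsDualWidomMaximizer T χ (Q χ)) :
    UpperSemicontinuous (fun χ : Γ →* Circle => (Q χ 0).re) := by
  have hQH (χ) := (hQ χ).1
  have hQb (χ) := (hQ χ).2.1
  have hQim (χ) := (hQ χ).2.2.1
  intro χ
  obtain ⟨-, -, -, hQpos, hQmax⟩ := hQ χ
  refine upperSemicontinuousAt_of_forall_ultrafilter fun p hp y hy => ?_
  obtain hy0 | hy0 := le_or_gt y 0
  · exact hy0.trans hQpos.le
  obtain ⟨h, hlim⟩ := p.exists_forall_tendsto_of_norm_le hQb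
  have hh : IsHinf T χ h := isHinf_of_tendsto hTmaps hp hQH hQb hlim
  have hhb : ∀ z ∈ ball (0 : ℂ) 1, ‖h z‖ ≤ 1 := fun z hz =>
    le_of_tendsto' (hlim z hz).norm fun χ' => hQb χ' z hz
  have hlim0 := hlim 0 (mem_ball_self one_pos)
  have him : (h 0).im = 0 := by
    refine tendsto_nhds_unique ((Complex.continuous_im.tendsto _).comp hlim0) ?_
    simp only [Function.comp_def, hQim, tendsto_const_nhds]
  have hre : y ≤ (h 0).re := ge_of_tendsto ((Complex.continuous_re.tendsto _).comp hlim0) hy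
  exact hre.trans (hQmax h hh hhb him (hy0.trans_le hre))

/-- Lemma 3.3.  Let `𝔢` be a regular Parreau–Widom set (PW encoded via
Widom's theorem on the disc model of the universal cover of `Ω`, deck group `Γ`).  The map
`χ ↦ Q_χ(∞)` from the character group `π₁(Ω)*` to `(0,1]` is upper semicontinuous. -/
theorem dualWidomMaximizer_upperSemicontinuous {Γ : Type*} [Group Γ]
    (T : Γ → ℂ → ℂ)
    (hT1 : ∀ z, T 1 z = z)
    (hTmul : ∀ γ δ : Γ, ∀ z, T (γ * δ) z = T γ (T δ z))
    (hTmaps : ∀ γ : Γ, MapsTo (T γ) (ball (0 : ℂ) 1) (ball (0 : ℂ) 1))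
    (hTanal : ∀ γ : Γ, DifferentiableOn ℂ (T γ) (ball (0 : ℂ) 1))
    (hPW : ∀ χ : Γ →* Circle, ∃ h : ℂ → ℂ, IsHinf T χ h ∧ h 0 ≠ 0)
    (Q : (Γ →* Circle) → ℂ → ℂ)
    (hQ : ∀ χ : Γ →* Circle, IsDualWidomMaximizer T χ (Q χ))
    (hrange : ∀ χ : Γ →* Circle, (Q χ 0).re ∈ Set.Ioc (0 : ℝ) 1) :
    UpperSemicontinuous (fun χ : Γ →* Circle => (Q χ 0).re) :=
  dualWidomMaximizer_upperSemicontinuous_general T hTmaps Q hQ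
end

section
/- Let H be a Hilbert space of functions with reproducing kernel at a point ∞, i.e., there is K ∈ H with f(∞) = ⟨K, f⟩ for all f ∈ H, and K(∞) > 0. If f is a bounded function with ‖f‖_∞ ≤ 1 such that multiplication by f maps a reproducing kernel Hilbert space H_γ (kernel K^γ, K^γ(∞) > 0) contractively into another H_{γβ} (kernel K^{γβ}), then |f(∞)|² ≤ K^{γβ}(∞)/K^γ(∞). -/
open scoped ComplexInnerProductSpace

/-! Testing the evaluation identity `⟪K₂, M g⟫ = f(∞) ⟪K₁, g⟫` at `g = K₁` and applying
Cauchy–Schwarz together with `‖M K₁‖ ≤ ‖K₁‖` gives `|f(∞)| ‖K₁‖² ≤ ‖K₂‖ ‖K₁‖`;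
divide by `‖K₁‖` and square. -/

theorem norm_mul_norm_le_of_inner_eq_mul_inner_self {𝕜 E F : Type*} [RCLike 𝕜]
    [NormedAddCommGroup E] [InnerProductSpace 𝕜 E] [NormedAddCommGroup F] [InnerProductSpace 𝕜 F]
    {x : E} {y z : F} {c : 𝕜} (hz : ‖z‖ ≤ ‖x‖) (h : inner 𝕜 y z = c * inner 𝕜 x x) :
    ‖c‖ * ‖x‖ ≤ ‖y‖ := by
  rcases (norm_nonneg x).eq_or_lt with hx | hx
  · rw [← hx, mul_zero]
    exact norm_nonneg y
  refine le_of_mul_le_mul_right ?_ hx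
  calc ‖c‖ * ‖x‖ * ‖x‖ = ‖inner 𝕜 y z‖ := by
        rw [h, norm_mul, ← inner_self_re_eq_norm, inner_self_eq_norm_mul_norm, mul_assoc]
    _ ≤ ‖y‖ * ‖z‖ := norm_inner_le_norm y z
    _ ≤ ‖y‖ * ‖x‖ := by gcongr

/-- abstract Lemma 5.2.  Let `H₁, H₂` be reproducing kernel Hilbert spaces
(of functions) with reproducing kernels `K₁, K₂` for evaluation at the point `∞`, with
`K₁(∞) = ⟪K₁,K₁⟫ > 0`.  If multiplication by the bounded function `f` (with `‖f‖_∞ ≤ 1`)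
maps `H₁` contractively into `H₂` and `f(∞) = fInf` in the sense that
`(f·g)(∞) = ⟪K₂, f·g⟫ = fInf · ⟪K₁, g⟫` for all `g ∈ H₁`, then
`|f(∞)|² ≤ K₂(∞)/K₁(∞)`. -/
theorem rkhs_eval_sq_le {H₁ H₂ : Type*} [NormedAddCommGroup H₁] [InnerProductSpace ℂ H₁]
    [NormedAddCommGroup H₂] [InnerProductSpace ℂ H₂]
    (K₁ : H₁) (K₂ : H₂) (hK₁ : 0 < (⟪K₁, K₁⟫ : ℂ).re)
    (fInf : ℂ) (M : H₁ →ₗ[ℂ] H₂)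
    (hcontr : ∀ g : H₁, ‖M g‖ ≤ ‖g‖)
    (heval : ∀ g : H₁, (⟪K₂, M g⟫ : ℂ) = fInf * ⟪K₁, g⟫) :
    ‖fInf‖ ^ 2 ≤ (⟪K₂, K₂⟫ : ℂ).re / (⟪K₁, K₁⟫ : ℂ).re := by
  have hK₁_re : (⟪K₁, K₁⟫ : ℂ).re = ‖K₁‖ ^ 2 := inner_self_eq_norm_sq (𝕜 := ℂ) K₁
  have hK₂_re : (⟪K₂, K₂⟫ : ℂ).re = ‖K₂‖ ^ 2 := inner_self_eq_norm_sq (𝕜 := ℂ) K₂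
  rw [hK₁_re, hK₂_re, le_div_iff₀ (hK₁_re ▸ hK₁), ← mul_pow]
  exact pow_le_pow_left₀ (by positivity)
    (norm_mul_norm_le_of_inner_eq_mul_inner_self (hcontr K₁) (heval K₁)) 2
end

section
/- Let U be a connected open subset of ℂ, z₀ ∈ U, V ⊆ U a connected open neighborhood of z₀, and f_n, f_∞ analytic functions on U, uniformly bounded, nowhere vanishing on V, with f_n(z₀) > 0 and f_∞(z₀) > 0, such that |f_n(z)| → |f_∞(z)| for all z ∈ V. Then f_n → f_∞ uniformly on compact subsets of U. -/
/-!
Cauchy's estimate makes a uniformly bounded family of holomorphic functions equicontinuous, so by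
Arzelà–Ascoli every subsequence of `f n` has a further subsequence converging locally uniformly to
a holomorphic `g`. On `V` we have `‖g‖ = ‖fInf‖`, so `g / fInf` is holomorphic of constant modulus
there, hence constant by the maximum modulus principle; positivity at `z₀` makes the constant `1`,
and the identity theorem gives `g = fInf` on `U`. Thus every subsequence has a further subsequence
converging to `fInf`, and equicontinuity upgrades the resulting pointwise convergence to locally
uniform convergence.
-/

open Filter Metric Set Topology TopologicalSpace
open scoped ComplexOrder

section Equicontinuity

variable {ι X α : Type*} [TopologicalSpace X] [PseudoMetricSpace α]

theorem EquicontinuousWithinAt.cauchySeq_of_mem_closure {F : ℕ → X → α} {s : Set X} {x : X}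
    (hF : EquicontinuousWithinAt F s x) (hx : x ∈ closure s)
    (hs : ∀ y ∈ s, CauchySeq (F · y)) : CauchySeq (F · x) := by
  rw [Metric.cauchySeq_iff]
  intro ε hε
  have := mem_closure_iff_nhdsWithin_neBot.1 hx
  obtain ⟨y, hy, hys⟩ : ∃ y, (∀ n, dist (F n x) (F n y) < ε / 3) ∧ y ∈ s :=
    ((hF _ (dist_mem_uniformity (by positivity))).and self_mem_nhdsWithin).exists
  obtain ⟨N, hN⟩ := Metric.cauchySeq_iff.1 (hs y hys) (ε / 3) (by positivity)
  refine ⟨N, fun m hm n hn => ?_⟩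
  calc dist (F m x) (F n x)
      ≤ dist (F m x) (F m y) + dist (F m y) (F n y) + dist (F n y) (F n x) :=
        dist_triangle4 _ _ _ _
    _ < ε / 3 + ε / 3 + ε / 3 := by
        gcongr
        exacts [hy m, hN m hm n hn, dist_comm (F n x) _ ▸ hy n]
    _ = ε := by ring

theorem EquicontinuousOn.tendstoLocallyUniformlyOn_of_tendsto {l : Filter ι} [l.NeBot]
    {F : ι → X → α} {f : X → α} {s : Set X} (hF : EquicontinuousOn F s)
    (h : ∀ x ∈ s, Tendsto (F · x) l (𝓝 (f x))) : TendstoLocallyUniformlyOn F f l s := by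
  rw [Metric.tendstoLocallyUniformlyOn_iff]
  intro ε hε x hx
  have hnear : ∀ᶠ y in 𝓝[s] x, ∀ i, dist (F i x) (F i y) < ε / 3 :=
    hF x hx _ (dist_mem_uniformity (by positivity))
  refine ⟨_, inter_mem self_mem_nhdsWithin hnear, ?_⟩
  filter_upwards [Metric.tendsto_nhds.1 (h x hx) (ε / 3) (by positivity)] with i hi y ⟨hys, hy⟩
  have hlim : dist (f x) (f y) ≤ ε / 3 :=
    le_of_tendsto ((h x hx).dist (h y hys)) (Eventually.of_forall fun j => (hy j).le)
  calc dist (f y) (F i y) ≤ dist (f y) (f x) + dist (f x) (F i x) + dist (F i x) (F i y) :=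
        dist_triangle4 _ _ _ _
    _ < ε / 3 + ε / 3 + ε / 3 :=
        add_lt_add (add_lt_add_of_le_of_lt (dist_comm (f x) (f y) ▸ hlim)
          (dist_comm (F i x) _ ▸ hi)) (hy i)
    _ = ε := by ring

theorem exists_subseq_tendsto_of_equicontinuousOn [PseudoMetrizableSpace X] [ProperSpace α]
    {F : ℕ → X → α} {s : Set X} (hs : IsSeparable s) (hF : EquicontinuousOn F s)
    (hb : ∀ x ∈ s, Bornology.IsBounded (range (F · x))) :
    ∃ φ : ℕ → ℕ, StrictMono φ ∧
      ∃ g : X → α, ∀ x ∈ s, Tendsto (fun n => F (φ n) x) atTop (𝓝 (g x)) := by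
  cases isEmpty_or_nonempty α
  · exact ⟨id, strictMono_id, F 0, fun x => isEmptyElim (F 0 x)⟩
  obtain ⟨D, hDs, hDc, hsD⟩ := hs.exists_countable_dense_subset
  have := hDc.to_subtype
  -- A countable product of compact sets is sequentially compact: this is the diagonal argument.
  have hK : IsCompact (univ.pi fun d : D => closure (range (F · d))) :=
    isCompact_univ_pi fun d => (hb d (hDs d.2)).isCompact_closure
  obtain ⟨l, -, φ, hφ, hD⟩ := hK.tendsto_subseq (x := fun n (d : D) => F n d)
    fun n => mem_univ_pi.2 fun d => subset_closure (mem_range_self n)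
  have hcauchy : ∀ x ∈ s, CauchySeq fun n => F (φ n) x := fun x hx =>
    ((hF x hx).comp φ |>.mono hDs).cauchySeq_of_mem_closure (hsD hx)
      fun y hy => (tendsto_pi_nhds.1 hD ⟨y, hy⟩).cauchySeq
  choose! g hg using fun x hx => cauchySeq_tendsto_of_complete (hcauchy x hx)
  exact ⟨φ, hφ, g, hg⟩

end Equicontinuity

namespace Complex

variable {ι E : Type*} [NormedAddCommGroup E] [NormedSpace ℂ E]

theorem norm_sub_le_of_norm_le_on_closedBall {f : ℂ → E} {c z : ℂ} {R C : ℝ} (hR : 0 < R)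
    (hf : DifferentiableOn ℂ f (closedBall c (2 * R)))
    (hC : ∀ w ∈ closedBall c (2 * R), ‖f w‖ ≤ C) (hz : z ∈ ball c R) :
    ‖f z - f c‖ ≤ C / R * ‖z - c‖ := by
  have hderiv : ∀ w ∈ ball c R, ‖deriv f w‖ ≤ C / R := fun w hw => by
    have hsub : closedBall w R ⊆ closedBall c (2 * R) :=
      closedBall_subset_closedBall' (by linarith [mem_ball.1 hw])
    exact norm_deriv_le_of_forall_mem_sphere_norm_le hR (hf.diffContOnCl_ball hsub)
      fun ζ hζ => hC ζ (hsub (sphere_subset_closedBall hζ))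
  refine (convex_ball c R).norm_image_sub_le_of_norm_deriv_le (fun w hw => ?_) hderiv
    (mem_ball_self hR) hz
  exact hf.differentiableAt (closedBall_mem_nhds_of_mem (ball_subset_ball (by linarith) hw))

theorem equicontinuousAt_of_norm_le {F : ι → ℂ → E} {U : Set ℂ} {C : ℝ} {x : ℂ}
    (hU : IsOpen U) (hF : ∀ i, DifferentiableOn ℂ (F i) U) (hC : ∀ i, ∀ z ∈ U, ‖F i z‖ ≤ C)
    (hx : x ∈ U) : EquicontinuousAt F x := by
  obtain ⟨r, hr, hrU⟩ := nhds_basis_closedBall.mem_iff.1 (hU.mem_nhds hx)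
  have h2R : closedBall x (2 * (r / 2)) ⊆ U := by rwa [mul_div_cancel₀ r two_ne_zero]
  refine Metric.equicontinuousAt_of_continuity_modulus (fun z => C / (r / 2) * dist z x) ?_ F ?_
  · exact (continuous_const.mul (continuous_id.dist continuous_const)).tendsto' x 0 (by simp)
  · filter_upwards [ball_mem_nhds x (half_pos hr)] with z hz i
    rw [dist_comm, dist_eq_norm, dist_eq_norm]
    exact norm_sub_le_of_norm_le_on_closedBall (half_pos hr) ((hF i).mono h2R)
      (fun w hw => hC i w (h2R hw)) hz

theorem equicontinuousOn_of_norm_le {F : ι → ℂ → E} {U : Set ℂ} {C : ℝ}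
    (hU : IsOpen U) (hF : ∀ i, DifferentiableOn ℂ (F i) U) (hC : ∀ i, ∀ z ∈ U, ‖F i z‖ ≤ C) :
    EquicontinuousOn F U := fun _ hx =>
  (equicontinuousAt_of_norm_le hU hF hC hx).equicontinuousWithinAt U

theorem exists_subseq_tendstoLocallyUniformlyOn [ProperSpace E] {F : ℕ → ℂ → E} {U : Set ℂ}
    {C : ℝ} (hU : IsOpen U) (hF : ∀ n, DifferentiableOn ℂ (F n) U)
    (hC : ∀ n, ∀ z ∈ U, ‖F n z‖ ≤ C) :
    ∃ φ : ℕ → ℕ, StrictMono φ ∧ ∃ g : ℂ → E, DifferentiableOn ℂ g U ∧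
      TendstoLocallyUniformlyOn (F ∘ φ) g atTop U := by
  have hequi := equicontinuousOn_of_norm_le hU hF hC
  obtain ⟨φ, hφ, g, hg⟩ := exists_subseq_tendsto_of_equicontinuousOn
    (IsSeparable.of_separableSpace U) hequi fun x hx =>
      isBounded_iff_forall_norm_le.2 ⟨C, by rintro _ ⟨n, rfl⟩; exact hC n x hx⟩
  have hlim := (hequi.comp φ).tendstoLocallyUniformlyOn_of_tendsto hg
  exact ⟨φ, hφ, g, hlim.differentiableOn (Eventually.of_forall fun n => hF (φ n)) hU, hlim⟩

theorem eqOn_of_norm_eq_of_eq {f g : ℂ → ℂ} {V : Set ℂ} {z₀ : ℂ} (hV : IsOpen V)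
    (hVc : IsPreconnected V) (hf : DifferentiableOn ℂ f V) (hg : DifferentiableOn ℂ g V)
    (hg0 : ∀ z ∈ V, g z ≠ 0) (hnorm : ∀ z ∈ V, ‖f z‖ = ‖g z‖) (hz₀ : z₀ ∈ V)
    (hfg : f z₀ = g z₀) : EqOn f g V := by
  have hq : ∀ z ∈ V, ‖(f / g) z‖ = 1 := fun z hz => by
    rw [Pi.div_apply, norm_div, hnorm z hz, div_self (norm_ne_zero_iff.2 (hg0 z hz))]
  have hconst := eqOn_of_isPreconnected_of_isMaxOn_norm hVc hV (hf.div hg hg0) hz₀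
    fun z hz => ((hq z hz).trans (hq z₀ hz₀).symm).le
  intro z hz
  have := hconst hz
  rwa [Function.const_apply, Pi.div_apply, Pi.div_apply, hfg, div_self (hg0 z₀ hz₀),
    div_eq_one_iff_eq (hg0 z hz)] at this

end Complex

theorem tendstoLocallyUniformly_of_abs_tendsto_general
    (U V : Set ℂ) (hU : IsOpen U) (hUconn : IsConnected U)
    (hV : IsOpen V) (hVconn : IsConnected V) (hVU : V ⊆ U)
    (z₀ : ℂ) (hz₀ : z₀ ∈ V)
    (f : ℕ → ℂ → ℂ) (fInf : ℂ → ℂ)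
    (hfa : ∀ n, DifferentiableOn ℂ (f n) U) (hfInfa : DifferentiableOn ℂ fInf U)
    (C : ℝ) (hbd : ∀ n, ∀ z ∈ U, ‖f n z‖ ≤ C)
    (hnzInf : ∀ z ∈ V, fInf z ≠ 0)
    (hpos : ∀ n, (f n z₀).im = 0 ∧ 0 < (f n z₀).re)
    (hposInf : (fInf z₀).im = 0 ∧ 0 < (fInf z₀).re)
    (hmod : ∀ z ∈ V,
      Tendsto (fun n => ‖f n z‖) atTop (nhds ‖fInf z‖)) :
    TendstoLocallyUniformlyOn f fInf atTop U := by
  refine (Complex.equicontinuousOn_of_norm_le hU hfa hbd).tendstoLocallyUniformlyOn_of_tendsto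
    fun z hz => tendsto_of_subseq_tendsto fun ns hns => ?_
  obtain ⟨φ, hφ, g, hg, hlim⟩ :=
    Complex.exists_subseq_tendstoLocallyUniformlyOn hU (fun n => hfa (ns n)) fun n => hbd (ns n)
  have hnorm : ∀ z ∈ V, ‖g z‖ = ‖fInf z‖ := fun z hz =>
    tendsto_nhds_unique (hlim.tendsto_at (hVU hz)).norm
      ((hmod z hz).comp (hns.comp hφ.tendsto_atTop))
  have hg₀ : g z₀ = fInf z₀ := by
    have hg_nonneg : 0 ≤ g z₀ := ge_of_tendsto' (hlim.tendsto_at (hVU hz₀)) fun n =>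
      Complex.le_def.2 ⟨(hpos _).2.le, (hpos _).1.symm⟩
    rw [Complex.eq_coe_norm_of_nonneg hg_nonneg, hnorm z₀ hz₀,
      ← Complex.eq_coe_norm_of_nonneg (Complex.le_def.2 ⟨hposInf.2.le, hposInf.1.symm⟩)]
  have hEqV : EqOn g fInf V := Complex.eqOn_of_norm_eq_of_eq hV hVconn.isPreconnected
    (hg.mono hVU) (hfInfa.mono hVU) hnzInf hnorm hz₀ hg₀
  have hEqU : EqOn g fInf U := (hg.analyticOnNhd hU).eqOn_of_preconnected_of_eventuallyEq
    (hfInfa.analyticOnNhd hU) hUconn.isPreconnected (hVU hz₀)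
    (eventuallyEq_of_mem (hV.mem_nhds hz₀) hEqV)
  exact ⟨φ, hEqU hz ▸ hlim.tendsto_at hz⟩

/-- Proposition 4.2, planar version.  Let `U ⊆ ℂ` be a connected open set,
`z₀ ∈ V ⊆ U` with `V` open and connected, and `f_n, fInf` analytic on `U`, uniformly bounded,
nonvanishing on `V`, positive at `z₀`, with `|f_n(z)| → |fInf(z)|` for all `z ∈ V`.  Then
`f_n → fInf` uniformly on compact subsets of `U`. -/
theorem tendstoLocallyUniformly_of_abs_tendsto
    (U V : Set ℂ) (hU : IsOpen U) (hUconn : IsConnected U)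
    (hV : IsOpen V) (hVconn : IsConnected V) (hVU : V ⊆ U)
    (z₀ : ℂ) (hz₀ : z₀ ∈ V)
    (f : ℕ → ℂ → ℂ) (fInf : ℂ → ℂ)
    (hfa : ∀ n, DifferentiableOn ℂ (f n) U) (hfInfa : DifferentiableOn ℂ fInf U)
    (C : ℝ) (hbd : ∀ n, ∀ z ∈ U, ‖f n z‖ ≤ C)
    (hbdInf : ∀ z ∈ U, ‖fInf z‖ ≤ C)
    (hnz : ∀ n, ∀ z ∈ V, f n z ≠ 0) (hnzInf : ∀ z ∈ V, fInf z ≠ 0)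
    (hpos : ∀ n, (f n z₀).im = 0 ∧ 0 < (f n z₀).re)
    (hposInf : (fInf z₀).im = 0 ∧ 0 < (fInf z₀).re)
    (hmod : ∀ z ∈ V,
      Tendsto (fun n => ‖f n z‖) atTop (nhds ‖fInf z‖)) :
    TendstoLocallyUniformlyOn f fInf atTop U :=
  tendstoLocallyUniformly_of_abs_tendsto_general U V hU hUconn hV hVconn hVU z₀ hz₀ f fInf hfa
    hfInfa C hbd hnzInf hpos hposInf hmod
end

section
/- Let G be a compact metrizable group, d a compatible metric, Q : G → (0,1] upper semicontinuous, and suppose {χ₀^m : m ∈ ℤ} is dense in G. If for every sequence of integers k_j with χ₀^{k_j} → 1 one has Q(χ₀^{k_j}) → 1, then for every sequence χ_j → 1 in G one has Q(χ_j) → 1. -/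
/-!
Density and upper semicontinuity give powers `χ₀ ^ k j` within `2⁻ʲ` of `χ j` with
`Q (χ₀ ^ k j) < Q (χ j) + 2⁻ʲ`. These powers tend to `1`, so `Q (χ₀ ^ k j) → 1` bounds
`Q (χ j)` from below, and `Q ≤ 1` bounds it from above.
-/

open Filter Topology

section DenseRangeApproximation

variable {X ι : Type*} [PseudoMetricSpace X] {u : ι → X} {f : X → ℝ}

theorem DenseRange.exists_dist_lt_and_lt_add (hu : DenseRange u) (hf : UpperSemicontinuous f)
    (x : X) {ε : ℝ} (hε : 0 < ε) : ∃ i, dist (u i) x < ε ∧ f (u i) < f x + ε := by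
  have hopen : IsOpen (Metric.ball x ε ∩ {y | f y < f x + ε}) :=
    Metric.isOpen_ball.inter (hf.isOpen_preimage _)
  have hx : x ∈ Metric.ball x ε ∩ {y | f y < f x + ε} :=
    ⟨Metric.mem_ball_self hε, lt_add_of_pos_right _ hε⟩
  exact hu.exists_mem_open hopen ⟨x, hx⟩

theorem DenseRange.exists_seq_tendsto_and_lt_add (hu : DenseRange u)
    (hf : UpperSemicontinuous f) {x : ℕ → X} {a : X} (hx : Tendsto x atTop (𝓝 a))
    {ε : ℕ → ℝ} (hε : ∀ j, 0 < ε j) (hε₀ : Tendsto ε atTop (𝓝 0)) :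
    ∃ k : ℕ → ι, Tendsto (u ∘ k) atTop (𝓝 a) ∧ ∀ j, f (u (k j)) < f (x j) + ε j := by
  choose k hdist hlt using fun j => hu.exists_dist_lt_and_lt_add hf (x j) (hε j)
  refine ⟨k, ?_, hlt⟩
  rw [tendsto_iff_dist_tendsto_zero] at hx ⊢
  have hbound : Tendsto (fun j => ε j + dist (x j) a) atTop (𝓝 0) := by
    simpa using hε₀.add hx
  refine squeeze_zero (fun _ => dist_nonneg) (fun j => ?_) hbound
  calc dist (u (k j)) a ≤ dist (u (k j)) (x j) + dist (x j) a := dist_triangle _ _ _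
    _ ≤ ε j + dist (x j) a := by linarith [hdist j]

end DenseRangeApproximation

theorem continuity_at_one_from_orbit_general {G : Type*} [MetricSpace G] [Group G]
    (Q : G → ℝ) (hQ : ∀ g : G, Q g ∈ Set.Ioc (0 : ℝ) 1)
    (husc : UpperSemicontinuous Q)
    (χ₀ : G) (hdense : Dense (Set.range fun m : ℤ => χ₀ ^ m))
    (hpow : ∀ k : ℕ → ℤ, Tendsto (fun j => χ₀ ^ k j) atTop (nhds 1) →
      Tendsto (fun j => Q (χ₀ ^ k j)) atTop (nhds 1)) :
    ∀ χ : ℕ → G, Tendsto χ atTop (nhds 1) →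
      Tendsto (fun j => Q (χ j)) atTop (nhds 1) := by
  intro χ hχ
  have hhalf : Tendsto (fun j : ℕ => (1 / 2 : ℝ) ^ j) atTop (𝓝 0) :=
    tendsto_pow_atTop_nhds_zero_of_lt_one (by norm_num) (by norm_num)
  obtain ⟨k, hk, hQk⟩ := DenseRange.exists_seq_tendsto_and_lt_add hdense husc hχ
    (fun j => by positivity) hhalf
  have hlower : Tendsto (fun j => Q (χ₀ ^ k j) - (1 / 2 : ℝ) ^ j) atTop (𝓝 1) := by
    simpa using (hpow k hk).sub hhalf
  exact tendsto_of_tendsto_of_tendsto_of_le_of_le hlower tendsto_const_nhds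
    (fun j => by linarith [hQk j]) (fun j => (hQ (χ j)).2)

/-- diagonal argument of Lemma 3.6.  Let `G` be a compact metrizable
group, `Q : G → (0,1]` upper semicontinuous, and suppose the powers of `χ₀` are dense in
`G`.  If `Q(χ₀^{k_j}) → 1` along every sequence of integers with `χ₀^{k_j} → 1`, then
`Q(χ_j) → 1` along every sequence `χ_j → 1` in `G`. -/
theorem continuity_at_one_from_orbit {G : Type*} [MetricSpace G] [Group G]
    [IsTopologicalGroup G] [CompactSpace G]
    (Q : G → ℝ) (hQ : ∀ g : G, Q g ∈ Set.Ioc (0 : ℝ) 1)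
    (husc : UpperSemicontinuous Q)
    (χ₀ : G) (hdense : Dense (Set.range fun m : ℤ => χ₀ ^ m))
    (hpow : ∀ k : ℕ → ℤ, Tendsto (fun j => χ₀ ^ k j) atTop (nhds 1) →
      Tendsto (fun j => Q (χ₀ ^ k j)) atTop (nhds 1)) :
    ∀ χ : ℕ → G, Tendsto χ atTop (nhds 1) →
      Tendsto (fun j => Q (χ j)) atTop (nhds 1) :=
  continuity_at_one_from_orbit_general Q hQ husc χ₀ hdense hpow
end
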